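/- Let π : A → B be a surjective morphism of order-unit spaces, let L be a Lipschitz seminorm on A, and let L_B be the quotient seminorm on B. Then the dual map π' : B'° → A'° is an isometry for the dual seminorms L_B' and L'; consequently S(π) : (S(B),ρ_{L_B}) → (S(A),ρ_L) is an isometry. Moreover, if L is a Lip-norm then L_B is a Lip-norm. -/

import Mathlib

open scoped ENNReal

/-- An order-unit space in the sense of Kadison: a partially ordered real vector
space with a positive order unit `e` satisfying the order-unit property and the
Archimedean property. -/
structure OrderUnitSpace : Type 1 where
  carrier : Type
  [toAddCommGroup : AddCommGroup carrier]
  [toModule : Module ℝ carrier]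
  [toPartialOrder : PartialOrder carrier]
  add_le_add_left' : ∀ a b : carrier, a ≤ b → ∀ c : carrier, c + a ≤ c + b
  smul_nonneg' : ∀ (r : ℝ) (a : carrier), 0 ≤ r → 0 ≤ a → 0 ≤ r • a
  e : carrier
  e_nonneg : 0 ≤ e
  orderUnit : ∀ a : carrier, ∃ r : ℝ, a ≤ r • e
  arch : ∀ a : carrier, (∀ r : ℝ, 0 < r → a ≤ r • e) → a ≤ 0

attribute [instance] OrderUnitSpace.toAddCommGroup OrderUnitSpace.toModule
  OrderUnitSpace.toPartialOrder

/-- The topology generated by the open balls of a distance function. -/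
def ballTopology {S : Type*} (ρ : S → S → ℝ≥0∞) : TopologicalSpace S :=
  TopologicalSpace.generateFrom
    {U : Set S | ∃ (μ : S) (ε : ℝ≥0∞), 0 < ε ∧ U = {ν | ρ μ ν < ε}}

/-- The quotient seminorm of `L` along the surjection `π`. -/
noncomputable def quotientSeminorm {α β : Type*} (π : α → β) (L : α → ℝ) (b : β) : ℝ :=
  sInf {r : ℝ | ∃ a, π a = b ∧ L a = r}

/-- `L` induces `LB` via `π`, i.e. `LB` is the quotient seminorm of `L` for `π`. -/
def Induces {α β : Type*} (π : α → β) (L : α → ℝ) (LB : β → ℝ) : Prop :=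
  ∀ b, LB b = quotientSeminorm π L b

/-- Hausdorff distance between two subsets with respect to a distance function. -/
noncomputable def hausdorffDistWith {S : Type*} (ρ : S → S → ℝ≥0∞) (T U : Set S) : ℝ≥0∞ :=
  max (⨆ t ∈ T, ⨅ u ∈ U, ρ t u) (⨆ u ∈ U, ⨅ t ∈ T, ρ t u)

namespace OrderUnitSpace

variable (A B : OrderUnitSpace)

theorem le_of_sub_nonneg'' {x y : A.carrier} (h : 0 ≤ y - x) : x ≤ y := by
  have h2 := A.add_le_add_left' 0 (y - x) h x
  have h3 : x + (y - x) = y := by abel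
  rw [add_zero, h3] at h2
  exact h2

theorem smul_e_mono {r s : ℝ} (h : r ≤ s) : r • A.e ≤ s • A.e := by
  apply A.le_of_sub_nonneg''
  have h3 : s • A.e - r • A.e = (s - r) • A.e := by rw [sub_smul]
  rw [h3]
  exact A.smul_nonneg' _ _ (by linarith) A.e_nonneg

/-- The order-unit norm. -/
noncomputable def onorm (a : A.carrier) : ℝ :=
  sInf {r : ℝ | -(r • A.e) ≤ a ∧ a ≤ r • A.e}

/-- A state: a unital positive linear functional. -/
def IsState (μ : A.carrier →ₗ[ℝ] ℝ) : Prop :=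
  μ A.e = 1 ∧ ∀ a : A.carrier, 0 ≤ a → 0 ≤ μ a

/-- The state space. -/
def State : Type := {μ : A.carrier →ₗ[ℝ] ℝ // A.IsState μ}

/-- The weak-* topology on the state space. -/
instance : TopologicalSpace A.State :=
  TopologicalSpace.induced (fun μ : A.State => (μ.1 : A.carrier → ℝ)) Pi.topologicalSpace

/-- The metric `ρ_L` on the state space defined by a seminorm `L`. -/
noncomputable def rho (L : Seminorm ℝ A.carrier) (μ ν : A.State) : ℝ≥0∞ :=
  ⨆ a : {a : A.carrier // L a ≤ 1}, ENNReal.ofReal |μ.1 a.1 - ν.1 a.1|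

/-- A Lipschitz seminorm: its null space is exactly `ℝ e`. -/
def IsLipschitz (L : Seminorm ℝ A.carrier) : Prop :=
  ∀ a : A.carrier, L a = 0 ↔ ∃ t : ℝ, a = t • A.e

/-- A Lip-norm: a Lipschitz seminorm whose metric `ρ_L` induces the weak-* topology. -/
def IsLipNorm (L : Seminorm ℝ A.carrier) : Prop :=
  A.IsLipschitz L ∧ ballTopology (A.rho L) = (inferInstance : TopologicalSpace A.State)

/-- The diameter of the state space for `ρ_L`. -/
noncomputable def diam (L : Seminorm ℝ A.carrier) : ℝ≥0∞ :=
  ⨆ (μ : A.State) (ν : A.State), A.rho L μ ν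

/-- The radius: half the diameter. -/
noncomputable def radius (L : Seminorm ℝ A.carrier) : ℝ≥0∞ := A.diam L / 2

/-- Morphism of order-unit spaces: a unital positive linear map. -/
def IsMorphism (f : A.carrier →ₗ[ℝ] B.carrier) : Prop :=
  f A.e = B.e ∧ ∀ a : A.carrier, 0 ≤ a → 0 ≤ f a

/-- Pull back a state along a morphism; this is `S(π)`. -/
noncomputable def pullState (f : A.carrier →ₗ[ℝ] B.carrier) (hf : A.IsMorphism B f)
    (μ : B.State) : A.State :=
  ⟨(μ.1).comp f, by
    constructor
    · rw [LinearMap.comp_apply, hf.1]; exact μ.2.1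
    · intro a ha; exact μ.2.2 _ (hf.2 a ha)⟩

/-- The direct sum `A ⊕ B` as an order-unit space. -/
@[reducible] def prod : OrderUnitSpace where
  carrier := A.carrier × B.carrier
  add_le_add_left' := by
    intro a b hab c
    rw [Prod.le_def] at hab ⊢
    exact ⟨A.add_le_add_left' _ _ hab.1 _, B.add_le_add_left' _ _ hab.2 _⟩
  smul_nonneg' := by
    intro r a hr ha
    rw [Prod.le_def] at ha ⊢
    exact ⟨A.smul_nonneg' r a.1 hr ha.1, B.smul_nonneg' r a.2 hr ha.2⟩
  e := (A.e, B.e)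
  e_nonneg := by
    rw [Prod.le_def]
    exact ⟨A.e_nonneg, B.e_nonneg⟩
  orderUnit := by
    intro a
    obtain ⟨r₁, h1⟩ := A.orderUnit a.1
    obtain ⟨r₂, h2⟩ := B.orderUnit a.2
    refine ⟨max r₁ r₂, ?_⟩
    rw [Prod.le_def]
    exact ⟨le_trans h1 (A.smul_e_mono (le_max_left _ _)),
      le_trans h2 (B.smul_e_mono (le_max_right _ _))⟩
  arch := by
    intro a h
    rw [Prod.le_def]
    exact ⟨A.arch a.1 fun r hr => ((Prod.le_def.mp (h r hr)).1),
      B.arch a.2 fun r hr => ((Prod.le_def.mp (h r hr)).2)⟩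

/-- The embedding of `S(A)` into `S(A ⊕ B)` dual to the first coordinate projection. -/
noncomputable def leftState (μ : A.State) : (A.prod B).State :=
  ⟨(μ.1).comp (LinearMap.fst ℝ A.carrier B.carrier), by
    constructor
    · exact μ.2.1
    · intro p hp; exact μ.2.2 p.1 hp.1⟩

/-- The embedding of `S(B)` into `S(A ⊕ B)` dual to the second coordinate projection. -/
noncomputable def rightState (ν : B.State) : (A.prod B).State :=
  ⟨(ν.1).comp (LinearMap.snd ℝ A.carrier B.carrier), by
    constructor
    · exact ν.2.1
    · intro p hp; exact ν.2.2 p.2 hp.2⟩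

/-- The set `M(L_A, L_B)` of Lip-norms on `A ⊕ B` inducing `L_A` and `L_B`
via the coordinate projections. -/
def admissible (LA : Seminorm ℝ A.carrier) (LB : Seminorm ℝ B.carrier) :
    Set (Seminorm ℝ (A.prod B).carrier) :=
  {L | (A.prod B).IsLipNorm L ∧
    Induces (Prod.fst : A.carrier × B.carrier → A.carrier) (fun p => L p) (fun a => LA a) ∧
    Induces (Prod.snd : A.carrier × B.carrier → B.carrier) (fun p => L p) (fun b => LB b)}

/-- Quantum Gromov–Hausdorff distance. -/
noncomputable def distq (LA : Seminorm ℝ A.carrier) (LB : Seminorm ℝ B.carrier) : ℝ≥0∞ :=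
  ⨅ L ∈ A.admissible B LA LB,
    hausdorffDistWith ((A.prod B).rho L) (Set.range (A.leftState B)) (Set.range (A.rightState B))

end OrderUnitSpace

/-- A norm-bounded linear functional on an order-unit space. -/
def BoundedFunctional (A : OrderUnitSpace) (lam : A.carrier →ₗ[ℝ] ℝ) : Prop :=
  ∃ C : ℝ, ∀ a : A.carrier, |lam a| ≤ C * A.onorm a

/-- The dual seminorm `L'(λ) = sup {|λ(a)| : L(a) ≤ 1}` (possibly `+∞`). -/
noncomputable def dualSeminorm (A : OrderUnitSpace) (L : Seminorm ℝ A.carrier)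
    (lam : A.carrier →ₗ[ℝ] ℝ) : ℝ≥0∞ :=
  ⨆ a : {a : A.carrier // L a ≤ 1}, ENNReal.ofReal |lam a.1|

/-!
The key point is that every `b` with `L_B b ≤ 1` lifts, for each `s > 1`, to some `a` with
`L a < s`. Hence `sup_{L a ≤ 1} |λ (π a)| = sup_{L_B b ≤ 1} |λ b|` for every functional `λ`
on `B`, which is the dual isometry, and `ρ_L (μ ∘ π) (ν ∘ π) = ρ_{L_B} μ ν` is its case
`λ = μ - ν`.

If `L` is a Lip-norm, the weak-* topology of `S(B)` is induced along `S(π)` (as `π` is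
surjective), and so is the `ρ_{L_B}`-topology (as `S(π)` is an isometry); they therefore agree.
`L_B` is Lipschitz: if `L_B b = 0` with `b ∉ ℝ e`, Hahn–Banach for the sublinear functional
`a ↦ inf {r | a ≤ r e}` gives states `μ, ν` with `μ b ≠ ν b`, and scaling `b` shows
`ρ_{L_B} μ ν = ∞`; but `ρ_L` is finite, since its balls of infinite radius are clopen in the
connected weak-* state space.
-/

namespace OrderUnitSpace

variable (A : OrderUnitSpace)

instance : IsOrderedAddMonoid A.carrier where
  add_le_add_left a b h c := by simpa only [add_comm c] using A.add_le_add_left' a b h c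

instance : PosSMulMono ℝ A.carrier :=
  PosSMulMono.of_smul_nonneg fun r hr a ha => A.smul_nonneg' r a hr ha

theorem eq_zero_of_e_eq_zero (he : A.e = 0) (a : A.carrier) : a = 0 := by
  obtain ⟨r, hr⟩ := A.orderUnit a
  obtain ⟨s, hs⟩ := A.orderUnit (-a)
  rw [he, smul_zero] at hr hs
  exact le_antisymm hr (neg_nonpos.1 hs)

theorem nonneg_of_smul_e_nonneg (he : A.e ≠ 0) {r : ℝ} (h : 0 ≤ r • A.e) : 0 ≤ r := by
  by_contra! hr
  have : A.e ≤ 0 := by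
    simpa [smul_smul, inv_mul_cancel₀ hr.ne] using
      smul_nonpos_of_nonpos_of_nonneg (inv_neg''.2 hr).le h
  exact he (le_antisymm this A.e_nonneg)

/-- Hahn–Banach extensions dominated by this sublinear functional are states. -/
noncomputable def upper (a : A.carrier) : ℝ := sInf {r : ℝ | a ≤ r • A.e}

theorem bddBelow_setOf_le_smul_e (he : A.e ≠ 0) (a : A.carrier) :
    BddBelow {r : ℝ | a ≤ r • A.e} := by
  obtain ⟨s, hs⟩ := A.orderUnit (-a)
  refine ⟨-s, fun r hr => ?_⟩
  have : 0 ≤ (r + s) • A.e := by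
    rw [add_smul, ← sub_neg_eq_add, sub_nonneg]
    exact (neg_le.1 hs).trans hr
  linarith [A.nonneg_of_smul_e_nonneg he this]

theorem upper_le (he : A.e ≠ 0) {a : A.carrier} {r : ℝ} (h : a ≤ r • A.e) : A.upper a ≤ r :=
  csInf_le (A.bddBelow_setOf_le_smul_e he a) h

theorem le_upper_smul_e (a : A.carrier) : a ≤ A.upper a • A.e := by
  rw [← sub_nonpos]
  refine A.arch _ fun r hr => ?_
  obtain ⟨s, hs, hsr⟩ :=
    exists_lt_of_csInf_lt (A.orderUnit a) (lt_add_of_pos_right (A.upper a) hr)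
  rw [sub_le_iff_le_add, ← add_smul, add_comm r]
  exact le_trans hs (A.smul_e_mono hsr.le)

theorem upper_add (he : A.e ≠ 0) (a b : A.carrier) :
    A.upper (a + b) ≤ A.upper a + A.upper b :=
  A.upper_le he <| add_smul (A.upper a) (A.upper b) A.e ▸
    add_le_add (A.le_upper_smul_e a) (A.le_upper_smul_e b)

theorem upper_smul (he : A.e ≠ 0) {c : ℝ} (hc : 0 < c) (a : A.carrier) :
    A.upper (c • a) = c * A.upper a := by
  have hle : ∀ {c : ℝ}, 0 < c → ∀ a, A.upper (c • a) ≤ c * A.upper a := fun {c} hc a =>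
    A.upper_le he <| by
      rw [mul_smul]; exact smul_le_smul_of_nonneg_left (A.le_upper_smul_e a) hc.le
  refine (hle hc a).antisymm ?_
  have := hle (inv_pos.2 hc) (c • a)
  rw [inv_smul_smul₀ hc.ne'] at this
  rwa [← le_inv_mul_iff₀ hc]

theorem upper_zero (he : A.e ≠ 0) : A.upper 0 = 0 :=
  (A.upper_le he (zero_smul ℝ A.e).ge).antisymm <|
    A.nonneg_of_smul_e_nonneg he (A.le_upper_smul_e 0)

theorem isState_of_le_upper (he : A.e ≠ 0) (g : A.carrier →ₗ[ℝ] ℝ)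
    (hg : ∀ a, g a ≤ A.upper a) : A.IsState g := by
  have hpos : ∀ a, 0 ≤ a → 0 ≤ g a := fun a ha => by
    have := (hg (-a)).trans (A.upper_le he (r := 0) (by rwa [zero_smul, neg_nonpos]))
    rwa [map_neg, neg_nonpos] at this
  refine ⟨le_antisymm ((hg A.e).trans (A.upper_le he (one_smul ℝ A.e).ge)) ?_, hpos⟩
  have := (hg (-A.e)).trans (A.upper_le he (neg_one_smul ℝ A.e).ge)
  rw [map_neg] at this
  linarith

theorem exists_state_apply_eq (he : A.e ≠ 0) {b : A.carrier} (hb : b ≠ 0) {t : ℝ}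
    (ht₁ : -A.upper (-b) ≤ t) (ht₂ : t ≤ A.upper b) : ∃ μ : A.State, μ.1 b = t := by
  let f : A.carrier →ₗ.[ℝ] ℝ := LinearPMap.mkSpanSingleton b t hb
  have hdom : ∀ x : f.domain, f x ≤ A.upper x := by
    rintro ⟨x, hx⟩
    obtain ⟨s, rfl⟩ := Submodule.mem_span_singleton.1 hx
    rw [LinearPMap.mkSpanSingleton'_apply]
    change s * t ≤ A.upper (s • b)
    rcases lt_trichotomy s 0 with hs | rfl | hs
    · rw [← neg_neg s, neg_smul, ← smul_neg, A.upper_smul he (neg_pos.2 hs)]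
      nlinarith
    · simp [A.upper_zero he]
    · rw [A.upper_smul he hs]
      exact mul_le_mul_of_nonneg_left ht₂ hs.le
  obtain ⟨g, hgb, hg⟩ := exists_extension_of_le_sublinear _ A.upper
    (fun c hc => A.upper_smul he hc) (A.upper_add he) hdom
  refine ⟨⟨g, A.isState_of_le_upper he g hg⟩, ?_⟩
  exact (hgb ⟨b, _⟩).trans (LinearPMap.mkSpanSingleton_apply ℝ ℝ hb t)

theorem exists_states_apply_ne {b : A.carrier} (hb : ∀ t : ℝ, b ≠ t • A.e) :
    ∃ μ ν : A.State, μ.1 b ≠ ν.1 b := by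
  have he : A.e ≠ 0 := fun he => hb 0 (by rw [zero_smul]; exact A.eq_zero_of_e_eq_zero he b)
  have hb0 : b ≠ 0 := fun h => hb 0 (by rw [h, zero_smul])
  have hlt : -A.upper (-b) < A.upper b := by
    refine lt_of_le_of_ne ?_ fun h => hb (A.upper b) (le_antisymm (A.le_upper_smul_e b) ?_)
    · have := A.upper_add he b (-b)
      rw [add_neg_cancel, A.upper_zero he] at this
      linarith
    · have := A.le_upper_smul_e (-b)
      rwa [show A.upper (-b) = -A.upper b by linarith, neg_smul, neg_le_neg_iff] at this
  obtain ⟨μ, hμ⟩ := A.exists_state_apply_eq he hb0 hlt.le le_rfl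
  obtain ⟨ν, hν⟩ := A.exists_state_apply_eq he hb0 le_rfl hlt.le
  exact ⟨μ, ν, by rw [hμ, hν]; exact hlt.ne'⟩

end OrderUnitSpace

namespace OrderUnitSpace

variable {A : OrderUnitSpace} {L : Seminorm ℝ A.carrier}

theorem ofReal_abs_le_dualSeminorm (lam : A.carrier →ₗ[ℝ] ℝ) {a : A.carrier} (ha : L a ≤ 1) :
    ENNReal.ofReal |lam a| ≤ dualSeminorm A L lam :=
  le_iSup (fun a : {a : A.carrier // L a ≤ 1} => ENNReal.ofReal |lam a.1|) ⟨a, ha⟩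

theorem ofReal_mul_abs_le_dualSeminorm (lam : A.carrier →ₗ[ℝ] ℝ) {a : A.carrier} {t : ℝ}
    (ht : 0 ≤ t) (ha : t * L a ≤ 1) :
    ENNReal.ofReal (t * |lam a|) ≤ dualSeminorm A L lam := by
  have : L (t • a) ≤ 1 := by rwa [map_smul_eq_mul, Real.norm_of_nonneg ht]
  simpa [abs_mul, abs_of_nonneg ht] using ofReal_abs_le_dualSeminorm lam this

theorem dualSeminorm_eq_top_of_apply_ne_zero {lam : A.carrier →ₗ[ℝ] ℝ} {a : A.carrier}
    (hLa : L a = 0) (ha : lam a ≠ 0) : dualSeminorm A L lam = ⊤ := by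
  refine ENNReal.eq_top_of_forall_nnreal_le fun r => ?_
  have hpos : 0 < |lam a| := abs_pos.2 ha
  have := ofReal_mul_abs_le_dualSeminorm lam (t := r / |lam a|) (by positivity)
    (by rw [hLa, mul_zero]; exact zero_le_one)
  rwa [div_mul_cancel₀ _ hpos.ne', ENNReal.ofReal_coe_nnreal] at this

theorem dualSeminorm_zero : dualSeminorm A L 0 = 0 := by
  simp [dualSeminorm]

theorem dualSeminorm_neg (lam : A.carrier →ₗ[ℝ] ℝ) :
    dualSeminorm A L (-lam) = dualSeminorm A L lam := by
  simp [dualSeminorm]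

theorem dualSeminorm_add_le (lam lam' : A.carrier →ₗ[ℝ] ℝ) :
    dualSeminorm A L (lam + lam') ≤ dualSeminorm A L lam + dualSeminorm A L lam' :=
  iSup_le fun a => calc
    ENNReal.ofReal |(lam + lam') a.1| ≤ ENNReal.ofReal (|lam a.1| + |lam' a.1|) :=
      ENNReal.ofReal_le_ofReal (abs_add_le _ _)
    _ ≤ ENNReal.ofReal |lam a.1| + ENNReal.ofReal |lam' a.1| := ENNReal.ofReal_add_le
    _ ≤ _ :=
      add_le_add (ofReal_abs_le_dualSeminorm lam a.2) (ofReal_abs_le_dualSeminorm lam' a.2)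

theorem rho_eq_dualSeminorm (μ ν : A.State) :
    A.rho L μ ν = dualSeminorm A L (μ.1 - ν.1) := rfl

theorem rho_self (μ : A.State) : A.rho L μ μ = 0 := by
  rw [rho_eq_dualSeminorm, sub_self, dualSeminorm_zero]

theorem rho_comm (μ ν : A.State) : A.rho L μ ν = A.rho L ν μ := by
  rw [rho_eq_dualSeminorm, ← dualSeminorm_neg, neg_sub, rho_eq_dualSeminorm]

theorem rho_triangle (μ κ ν : A.State) : A.rho L μ ν ≤ A.rho L μ κ + A.rho L κ ν := by
  simpa only [rho_eq_dualSeminorm, sub_add_sub_cancel] using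
    dualSeminorm_add_le (L := L) (μ.1 - κ.1) (κ.1 - ν.1)

end OrderUnitSpace

namespace Induces

variable {α β : Type*} {π : α → β} {L : α → ℝ} {LB : β → ℝ}

theorem le (hq : Induces π L LB) (hL : ∀ a, 0 ≤ L a) (a : α) : LB (π a) ≤ L a := by
  rw [hq]
  exact csInf_le ⟨0, by rintro r ⟨a, -, rfl⟩; exact hL a⟩ ⟨a, rfl, rfl⟩

theorem exists_lt (hq : Induces π L LB) (hsurj : Function.Surjective π) {b : β} {s : ℝ}
    (h : LB b < s) : ∃ a, π a = b ∧ L a < s := by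
  obtain ⟨a₀, rfl⟩ := hsurj b
  rw [hq, quotientSeminorm] at h
  have hne : {r | ∃ a, π a = π a₀ ∧ L a = r}.Nonempty := ⟨L a₀, a₀, rfl, rfl⟩
  obtain ⟨_, ⟨a, hab, rfl⟩, has⟩ := exists_lt_of_csInf_lt hne h
  exact ⟨a, hab, has⟩

end Induces

namespace OrderUnitSpace

variable {A B : OrderUnitSpace} {π : A.carrier →ₗ[ℝ] B.carrier}
  {L : Seminorm ℝ A.carrier} {LB : Seminorm ℝ B.carrier}

theorem dualSeminorm_comp_of_induces (hsurj : Function.Surjective π)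
    (hq : Induces π (fun a => L a) (fun b => LB b)) (lam : B.carrier →ₗ[ℝ] ℝ) :
    dualSeminorm A L (lam.comp π) = dualSeminorm B LB lam := by
  refine le_antisymm (iSup_le fun a => ?_) (iSup_le fun ⟨b, hb⟩ => ?_)
  · exact ofReal_abs_le_dualSeminorm lam ((hq.le (apply_nonneg L) a.1).trans a.2)
  refine ENNReal.le_of_forall_lt_one_mul_le fun c hc => ?_
  rcases eq_or_ne c 0 with rfl | hc0
  · simp
  have ht : 0 < c.toReal := ENNReal.toReal_pos hc0 (hc.trans ENNReal.one_lt_top).ne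
  have ht1 : c.toReal < 1 := ENNReal.toReal_lt_of_lt_ofReal (by simpa using hc)
  obtain ⟨a, rfl, ha⟩ := hq.exists_lt hsurj (hb.trans_lt (one_lt_inv₀ ht |>.2 ht1))
  calc c * ENNReal.ofReal |lam (π a)| = ENNReal.ofReal (c.toReal * |lam.comp π a|) := by
        rw [ENNReal.ofReal_mul ht.le, ENNReal.ofReal_toReal (hc.trans ENNReal.one_lt_top).ne]
        rfl
    _ ≤ dualSeminorm A L (lam.comp π) :=
        ofReal_mul_abs_le_dualSeminorm _ ht.le ((lt_inv_mul_iff₀ ht).1 (by rwa [mul_one])).le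

theorem rho_pullState (hπ : A.IsMorphism B π) (hsurj : Function.Surjective π)
    (hq : Induces π (fun a => L a) (fun b => LB b)) (μ ν : B.State) :
    A.rho L (A.pullState B π hπ μ) (A.pullState B π hπ ν) = B.rho LB μ ν := by
  rw [rho_eq_dualSeminorm, rho_eq_dualSeminorm, ← dualSeminorm_comp_of_induces hsurj hq,
    LinearMap.sub_comp]
  rfl

end OrderUnitSpace

open Topology

section BallTopology

variable {S T : Type*}

theorem isOpen_ballTopology_ball (ρ : S → S → ℝ≥0∞) (x : S) {ε : ℝ≥0∞} (hε : 0 < ε) :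
    IsOpen[ballTopology ρ] {y | ρ x y < ε} :=
  TopologicalSpace.isOpen_generateFrom_of_mem ⟨x, ε, hε, rfl⟩

theorem ballTopology_eq_induced {f : S → T} {ρS : S → S → ℝ≥0∞} {ρT : T → T → ℝ≥0∞}
    (hself : ∀ x, ρS x x = 0) (htri : ∀ x y z, ρT x z ≤ ρT x y + ρT y z)
    (hiso : ∀ x y, ρT (f x) (f y) = ρS x y) :
    ballTopology ρS = TopologicalSpace.induced f (ballTopology ρT) := by
  let := ballTopology ρS
  refine le_antisymm ?_ (le_generateFrom ?_)
  · rw [show ballTopology ρT = .generateFrom _ from rfl, induced_generateFrom_eq]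
    refine le_generateFrom ?_
    rintro _ ⟨_, ⟨z, ε, -, rfl⟩, rfl⟩
    refine isOpen_iff_forall_mem_open.2 fun x hx => ⟨{y | ρS x y < ε - ρT z (f x)}, fun y hy => ?_,
      isOpen_ballTopology_ball ρS x (tsub_pos_of_lt hx), by simpa [hself] using hx⟩
    calc ρT z (f y) ≤ ρT z (f x) + ρS x y := hiso x y ▸ htri _ _ _
      _ < ρT z (f x) + (ε - ρT z (f x)) := ENNReal.add_lt_add_left hx.ne_top hy
      _ = ε := add_tsub_cancel_of_le hx.le
  · rintro _ ⟨x, ε, hε, rfl⟩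
    exact ⟨_, isOpen_ballTopology_ball ρT (f x) hε, by ext; simp [hiso]⟩

/-- Balls of infinite radius are clopen, so a connected set has finite diameter. -/
theorem ne_top_of_mem_connectedComponent_ballTopology {ρ : S → S → ℝ≥0∞}
    (hself : ∀ x, ρ x x = 0) (hcomm : ∀ x y, ρ x y = ρ y x)
    (htri : ∀ x y z, ρ x z ≤ ρ x y + ρ y z) {x y : S}
    (hxy : y ∈ @connectedComponent S (ballTopology ρ) x) : ρ x y ≠ ⊤ := by
  let := ballTopology ρ
  have hopen : ∀ z, IsOpen {w | ρ z w < ⊤} := fun z =>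
    isOpen_ballTopology_ball ρ z ENNReal.zero_lt_top
  have hclopen : IsClopen {z | ρ x z < ⊤} := by
    refine ⟨isOpen_compl_iff.1 <| isOpen_iff_forall_mem_open.2 fun z hz =>
      ⟨_, fun w hw hxw => hz ?_, hopen z, by simp [hself]⟩, hopen x⟩
    calc ρ x z ≤ ρ x w + ρ w z := htri _ _ _
      _ < ⊤ := ENNReal.add_lt_top.2 ⟨hxw, hcomm w z ▸ hw⟩
  exact (hclopen.connectedComponent_subset (by simp [hself]) hxy).ne

end BallTopology

namespace OrderUnitSpace

variable {A B : OrderUnitSpace} {π : A.carrier →ₗ[ℝ] B.carrier}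
  {L : Seminorm ℝ A.carrier} {LB : Seminorm ℝ B.carrier}

theorem State.joined (μ ν : A.State) : Joined μ ν := by
  have hstate : ∀ t : unitInterval, A.IsState ((1 - (t : ℝ)) • μ.1 + (t : ℝ) • ν.1) :=
    fun t => ⟨by simp [μ.2.1, ν.2.1], fun a ha => by
      simpa using add_nonneg (mul_nonneg (unitInterval.one_minus_nonneg t) (μ.2.2 a ha))
        (mul_nonneg t.2.1 (ν.2.2 a ha))⟩
  refine ⟨⟨⟨fun t => ⟨_, hstate t⟩, ?_⟩, Subtype.ext ?_, Subtype.ext ?_⟩⟩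
  · refine continuous_induced_rng.2 (continuous_pi fun a => ?_)
    change Continuous fun t : unitInterval => (1 - (t : ℝ)) * μ.1 a + t * ν.1 a
    fun_prop
  all_goals simp

theorem IsLipNorm.rho_ne_top (hL : A.IsLipNorm L) (μ ν : A.State) : A.rho L μ ν ≠ ⊤ :=
  ne_top_of_mem_connectedComponent_ballTopology rho_self rho_comm rho_triangle <| by
    rw [hL.2]
    exact pathComponent_subset_component μ (μ.joined ν)

theorem isLipschitz_of_rho_ne_top (he : L A.e = 0) (h : ∀ μ ν, A.rho L μ ν ≠ ⊤) :
    A.IsLipschitz L := by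
  refine fun b => ⟨fun hb => ?_, ?_⟩
  · by_contra! hne
    obtain ⟨μ, ν, hμν⟩ := A.exists_states_apply_ne hne
    exact h μ ν <| (rho_eq_dualSeminorm μ ν).trans <|
      dualSeminorm_eq_top_of_apply_ne_zero hb (sub_ne_zero.2 hμν)
  · rintro ⟨t, rfl⟩
    rw [map_smul_eq_mul, he, mul_zero]

theorem isInducing_pullState (hπ : A.IsMorphism B π) (hsurj : Function.Surjective π) :
    IsInducing (A.pullState B π hπ) := by
  refine ⟨?_⟩
  change TopologicalSpace.induced _ Pi.topologicalSpace =
    TopologicalSpace.induced _ (TopologicalSpace.induced _ Pi.topologicalSpace)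
  rw [induced_compose, show (fun μ : A.State => ⇑μ.1) ∘ A.pullState B π hπ =
    (· ∘ π) ∘ (fun μ : B.State => ⇑μ.1) from rfl, ← induced_compose, Pi.induced_precomp,
    hsurj.iInf_comp fun b => TopologicalSpace.induced (Function.eval b) _]
  rfl

theorem IsLipNorm.of_induces (hπ : A.IsMorphism B π) (hsurj : Function.Surjective π)
    (hq : Induces π (fun a => L a) (fun b => LB b)) (hL : A.IsLipNorm L) :
    B.IsLipNorm LB := by
  have hiso := rho_pullState hπ hsurj hq
  have he : LB B.e = 0 := by
    refine le_antisymm ?_ (apply_nonneg LB B.e)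
    rw [← (hL.1 A.e).2 ⟨1, (one_smul ℝ A.e).symm⟩, ← hπ.1]
    exact hq.le (apply_nonneg L) A.e
  refine ⟨isLipschitz_of_rho_ne_top he fun μ ν => hiso μ ν ▸ hL.rho_ne_top _ _, ?_⟩
  rw [ballTopology_eq_induced rho_self rho_triangle hiso, hL.2]
  exact (isInducing_pullState hπ hsurj).eq_induced.symm

end OrderUnitSpace

theorem quotient_dual_isometry_general (A B : OrderUnitSpace)
    (π : A.carrier →ₗ[ℝ] B.carrier) (hπ : A.IsMorphism B π)
    (hsurj : Function.Surjective π)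
    (L : Seminorm ℝ A.carrier)
    (LB : Seminorm ℝ B.carrier)
    (hq : Induces π (fun a => L a) (fun b => LB b)) :
    (∀ lam : B.carrier →ₗ[ℝ] ℝ, lam B.e = 0 → BoundedFunctional B lam →
      dualSeminorm A L (lam.comp π) = dualSeminorm B LB lam) ∧
    (∀ μ ν : B.State,
      A.rho L (A.pullState B π hπ μ) (A.pullState B π hπ ν) = B.rho LB μ ν) ∧
    (A.IsLipNorm L → B.IsLipNorm LB) :=
  ⟨fun lam _ _ => OrderUnitSpace.dualSeminorm_comp_of_induces hsurj hq lam,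
    OrderUnitSpace.rho_pullState hπ hsurj hq, OrderUnitSpace.IsLipNorm.of_induces hπ hsurj hq⟩

/-- **Proposition 3.1 of Rieffel.** Let `π : A → B` be a surjective morphism of
order-unit spaces, `L` a Lipschitz seminorm on `A`, and `L_B` the corresponding
quotient seminorm on `B`. Then `π'` is an isometry for the dual seminorms `L_B'` and
`L'` on `B'°` and `A'°`, and `S(π)` is an isometry for `ρ_{L_B}` and `ρ_L`.
If moreover `L` is a Lip-norm, then so is `L_B`. -/
theorem quotient_dual_isometry (A B : OrderUnitSpace)
    (π : A.carrier →ₗ[ℝ] B.carrier) (hπ : A.IsMorphism B π)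
    (hsurj : Function.Surjective π)
    (L : Seminorm ℝ A.carrier) (hL : A.IsLipschitz L)
    (LB : Seminorm ℝ B.carrier)
    (hq : Induces π (fun a => L a) (fun b => LB b)) :
    (∀ lam : B.carrier →ₗ[ℝ] ℝ, lam B.e = 0 → BoundedFunctional B lam →
      dualSeminorm A L (lam.comp π) = dualSeminorm B LB lam) ∧
    (∀ μ ν : B.State,
      A.rho L (A.pullState B π hπ μ) (A.pullState B π hπ ν) = B.rho LB μ ν) ∧
    (A.IsLipNorm L → B.IsLipNorm LB) :=
  quotient_dual_isometry_general A B π hπ hsurj L LB hq
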